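/- Let V_l : H_l → H_l ⊗ K (l = 1,2) be primitive isometries and define T₁₂ : B(H₂, H₁) → B(H₂, H₁) by T₁₂(X) = V₁*(X ⊗ id_K)V₂. If T₁₂ has an eigenvalue c of modulus one with eigenvector F (so T₁₂(F) = cF, F ≠ 0), then F*F = ‖F*F‖·id_{H₂} and FF* = ‖FF*‖·id_{H₁}; in particular dim H₁ = dim H₂ and F is a nonzero scalar multiple of a unitary U : H₂ → H₁. -/

import Mathlib

open Matrix Filter
open scoped Kronecker ComplexOrder

noncomputable section

/-- The action of `Φ ⊗ id_n` on block matrices, used to define complete positivity. -/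
def tensorId {a b : Type*} (Φ : Matrix a a ℂ → Matrix b b ℂ) (n : ℕ)
    (X : Matrix (a × Fin n) (a × Fin n) ℂ) : Matrix (b × Fin n) (b × Fin n) ℂ :=
  fun p q => Φ (fun i j => X (i, p.2) (j, q.2)) p.1 q.1

/-- A map between matrix algebras is completely positive if `Φ ⊗ id_n` preserves
positive semidefiniteness for every `n`. -/
def IsCompletelyPositive {a b : Type*} [Fintype a] [Fintype b]
    (Φ : Matrix a a ℂ → Matrix b b ℂ) : Prop :=
  ∀ (n : ℕ) (X : Matrix (a × Fin n) (a × Fin n) ℂ), X.PosSemidef → (tensorId Φ n X).PosSemidef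

/-- The map `X ↦ V₁* (X ⊗ 1_K) V₂` on `B(H₂, H₁)`, as a linear endomorphism.
For `V₁ = V₂ = V` this is the Heisenberg channel associated with the isometry `V`. -/
def sandwich {α β : Type*} [Fintype α] [Fintype β] {k : ℕ}
    (V₁ : Matrix (α × Fin k) α ℂ) (V₂ : Matrix (β × Fin k) β ℂ) :
    Module.End ℂ (Matrix α β ℂ) where
  toFun X := V₁ᴴ * (X ⊗ₖ (1 : Matrix (Fin k) (Fin k) ℂ)) * V₂
  map_add' X Y := by simp [Matrix.add_kronecker, Matrix.add_mul, Matrix.mul_add]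
  map_smul' c X := by simp [Matrix.smul_kronecker, Matrix.smul_mul, Matrix.mul_smul]

/-- The Kraus operators `K_i` of an isometry `V : H → H ⊗ K`,
defined by `K_i φ = (id ⊗ ⟨i|) V φ`. -/
def kraus {D k : ℕ} (V : Matrix (Fin D × Fin k) (Fin D) ℂ) (i : Fin k) :
    Matrix (Fin D) (Fin D) ℂ :=
  fun a b => V (a, i) b

/-- The `n`-step Kraus operator `K_{ι(n-1)} ⋯ K_{ι(0)}` associated with a word `ι`. -/
def krausString {D k : ℕ} (V : Matrix (Fin D × Fin k) (Fin D) ℂ) :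
    (n : ℕ) → (Fin n → Fin k) → Matrix (Fin D) (Fin D) ℂ
  | 0, _ => 1
  | n + 1, ι => kraus V (ι (Fin.last n)) * krausString V n (fun m => ι m.castSucc)

/-- The output state `tr_H [V(n) ρ V(n)*]` after `n` steps, a density matrix on `K^⊗n`. -/
def outputState {D k : ℕ} (V : Matrix (Fin D × Fin k) (Fin D) ℂ)
    (ρ : Matrix (Fin D) (Fin D) ℂ) (n : ℕ) :
    Matrix (Fin n → Fin k) (Fin n → Fin k) ℂ :=
  fun ι ι' => Matrix.trace (krausString V n ι * ρ * (krausString V n ι')ᴴ)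

/-- The Schrödinger (predual) transition map `ρ ↦ Σ_i K_i ρ K_i*`. -/
def schrodinger {D k : ℕ} (V : Matrix (Fin D × Fin k) (Fin D) ℂ)
    (ρ : Matrix (Fin D) (Fin D) ℂ) : Matrix (Fin D) (Fin D) ℂ :=
  ∑ i, kraus V i * ρ * (kraus V i)ᴴ

/-- A linear endomorphism of a matrix algebra is primitive if some power of it maps every
nonzero positive semidefinite matrix to a positive definite one. -/
def PrimitiveMap {α : Type*} [Fintype α] [DecidableEq α]
    (T : Module.End ℂ (Matrix α α ℂ)) : Prop :=
  ∃ n : ℕ, ∀ X : Matrix α α ℂ, X.PosSemidef → X ≠ 0 → ((T ^ n) X).PosDef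

/-- An isometry `V : H → H ⊗ K` is primitive if its channel `X ↦ V*(X ⊗ 1)V` is primitive. -/
def PrimitiveIso {D k : ℕ} (V : Matrix (Fin D × Fin k) (Fin D) ℂ) : Prop :=
  PrimitiveMap (sandwich V V)

/-- The pure state `|x⟩⟨x|` associated with a vector `x`. -/
def outer {α : Type*} (x : α → ℂ) : Matrix α α ℂ := Matrix.vecMulVec x (star x)

/-- The trace norm of a matrix: the trace of `√(A* A)`. -/
def traceNorm {α : Type*} [Fintype α] [DecidableEq α] (A : Matrix α α ℂ) : ℝ :=
  ((Matrix.posSemidef_conjTranspose_mul_self A).1.eigenvectorUnitary.1 *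
    diagonal (((↑) : ℝ → ℂ) ∘ (√·) ∘ (Matrix.posSemidef_conjTranspose_mul_self A).1.eigenvalues) *
    (star (Matrix.posSemidef_conjTranspose_mul_self A).1.eigenvectorUnitary : Matrix α α ℂ)).trace.re

/-- A quantum channel: a completely positive trace preserving linear map. -/
def IsCPTP {α β : Type*} [Fintype α] [Fintype β]
    (Φ : Matrix α α ℂ →ₗ[ℂ] Matrix β β ℂ) : Prop :=
  IsCompletelyPositive (Φ : Matrix α α ℂ → Matrix β β ℂ) ∧
    ∀ X : Matrix α α ℂ, (Φ X).trace = X.trace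

/-! By the Kadison–Schwarz inequality `T₁₂(F)ᴴ T₁₂(F) ≤ T₂₂(Fᴴ F)` and `|c| = 1`, the positive
matrix `Fᴴ F` satisfies `Fᴴ F ≤ T₂₂(Fᴴ F)`; since `Fᴴ` is an eigenvector of `T₂₁` for `c̄`,
likewise `F Fᴴ ≤ T₁₁(F Fᴴ)`. For a unital positive primitive map, every Hermitian `A ≤ T A` is a
multiple of the identity. The two multiples agree because `F (Fᴴ F) = (F Fᴴ) F`, and then taking
traces of `Fᴴ F` and `F Fᴴ` gives `D₁ = D₂`. -/

open scoped MatrixOrder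

namespace Matrix

variable {n : Type*} [Fintype n] [DecidableEq n]

theorem IsHermitian.le_smul_one_of_eigenvalues_le {A : Matrix n n ℂ} (hA : A.IsHermitian)
    {t : ℝ} (ht : ∀ i, hA.eigenvalues i ≤ t) : A ≤ (t : ℂ) • 1 := by
  have h := (le_algebraMap_iff_spectrum_le (r := t) (a := A) hA.isSelfAdjoint).mpr (by
    rw [hA.spectrum_real_eq_range_eigenvalues]
    rintro _ ⟨i, rfl⟩
    exact ht i)
  rwa [Algebra.algebraMap_eq_smul_one, ← Complex.coe_smul] at h

omit [Fintype n] in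
theorem pos_of_posSemidef_smul_one {t : ℝ} (ht : ((t : ℂ) • 1 : Matrix n n ℂ).PosSemidef)
    (hne : ((t : ℂ) • 1 : Matrix n n ℂ) ≠ 0) : 0 < t := by
  obtain ⟨i⟩ : Nonempty n := by
    by_contra h
    exact hne (by ext i; exact ((not_nonempty_iff.mp h).false i).elim)
  have hi := ht.diag_nonneg (i := i)
  simp only [smul_apply, one_apply_eq, smul_eq_mul, mul_one, Complex.zero_le_real] at hi
  exact hi.lt_of_ne (by rintro rfl; simp at hne)

end Matrix

section PositiveMap

variable {n : Type*} {T : Module.End ℂ (Matrix n n ℂ)}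

theorem posSemidef_pow_apply (hT : ∀ X : Matrix n n ℂ, X.PosSemidef → (T X).PosSemidef)
    (m : ℕ) {X : Matrix n n ℂ} (hX : X.PosSemidef) : ((T ^ m) X).PosSemidef := by
  induction m generalizing X with
  | zero => exact hX
  | succ m ih => exact ih (hT X hX)

theorem pow_apply_le_of_apply_le [Fintype n]
    (hT : ∀ X : Matrix n n ℂ, X.PosSemidef → (T X).PosSemidef) {C : Matrix n n ℂ} (hC : T C ≤ C)
    (m : ℕ) : (T ^ m) C ≤ C := by
  induction m with
  | zero => exact le_rfl
  | succ m ih =>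
    have hstep : (T ^ (m + 1)) C ≤ (T ^ m) C := by
      rw [Matrix.le_iff, pow_succ, Module.End.mul_apply, ← map_sub]
      exact posSemidef_pow_apply hT m hC
    exact hstep.trans ih

/-- If `A ≤ T A`, the gap `t • 1 - A` to the top eigenvalue `t` of `A` is a positive matrix that
`T` does not increase and that annihilates a top eigenvector `v`; so `⟪v, Tⁿ (t • 1 - A) v⟫ = 0`,
which primitivity allows only if `t • 1 - A = 0`. -/
theorem PrimitiveMap.eq_smul_one_of_le_apply [Fintype n] [DecidableEq n] (hP : PrimitiveMap T)
    (hT : ∀ X : Matrix n n ℂ, X.PosSemidef → (T X).PosSemidef) (hT₁ : T 1 = 1)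
    {A : Matrix n n ℂ} (hA : A.IsHermitian) (hle : A ≤ T A) : ∃ t : ℝ, A = (t : ℂ) • 1 := by
  cases isEmpty_or_nonempty n
  · exact ⟨0, Subsingleton.elim _ _⟩
  obtain ⟨i₀, hi₀⟩ := Finite.exists_max hA.eigenvalues
  set t := hA.eigenvalues i₀
  set C : Matrix n n ℂ := (t : ℂ) • 1 - A
  have hC : C.PosSemidef := Matrix.le_iff.mp (hA.le_smul_one_of_eigenvalues_le hi₀)
  have hTC : T C ≤ C := by
    simpa only [C, map_sub, map_smul, hT₁] using sub_le_sub_left hle _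
  set v : n → ℂ := ⇑(hA.eigenvectorBasis i₀)
  have hv : v ≠ 0 := fun h ↦
    hA.eigenvectorBasis.orthonormal.ne_zero i₀ (by ext j; exact congrFun h j)
  have hCv : C *ᵥ v = 0 := by
    simp [C, sub_mulVec, hA.mulVec_eigenvectorBasis, smul_mulVec, t, v, Complex.coe_smul]
  refine ⟨t, (sub_eq_zero.mp ?_).symm⟩
  by_contra hC₀
  obtain ⟨m, hm⟩ := hP
  have hpos := (hm C hC hC₀).dotProduct_mulVec_pos hv
  have hle' := (pow_apply_le_of_apply_le hT hTC m).dotProduct_mulVec_nonneg v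
  rw [sub_mulVec, dotProduct_sub, hCv, dotProduct_zero, zero_sub, neg_nonneg] at hle'
  exact lt_irrefl _ (hpos.trans_le hle')

end PositiveMap

section Sandwich

variable {α β : Type*} [Fintype α] [Fintype β] {k : ℕ}

theorem sandwich_apply (V₁ : Matrix (α × Fin k) α ℂ) (V₂ : Matrix (β × Fin k) β ℂ)
    (X : Matrix α β ℂ) : sandwich V₁ V₂ X = V₁ᴴ * (X ⊗ₖ (1 : Matrix (Fin k) (Fin k) ℂ)) * V₂ :=
  rfl

theorem conjTranspose_sandwich (V₁ : Matrix (α × Fin k) α ℂ) (V₂ : Matrix (β × Fin k) β ℂ)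
    (X : Matrix α β ℂ) : (sandwich V₁ V₂ X)ᴴ = sandwich V₂ V₁ Xᴴ := by
  simp only [sandwich_apply, conjTranspose_mul, conjTranspose_kronecker, conjTranspose_one,
    conjTranspose_conjTranspose, Matrix.mul_assoc]

theorem posSemidef_sandwich (V : Matrix (α × Fin k) α ℂ) {X : Matrix α α ℂ}
    (hX : X.PosSemidef) : (sandwich V V X).PosSemidef :=
  (hX.kronecker PosSemidef.one).conjTranspose_mul_mul_same V

theorem sandwich_one [DecidableEq α] {V : Matrix (α × Fin k) α ℂ} (hV : Vᴴ * V = 1) :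
    sandwich V V (1 : Matrix α α ℂ) = 1 := by
  rw [sandwich_apply, one_kronecker_one, Matrix.mul_one, hV]

/-- Kadison–Schwarz inequality: the difference is `Wᴴ (1 - V₁ V₁ᴴ) W` with `W = (X ⊗ 1) V₂`,
and `V₁ V₁ᴴ` is a projection. -/
theorem conjTranspose_sandwich_mul_self_le [DecidableEq α] {V₁ : Matrix (α × Fin k) α ℂ}
    (hV₁ : V₁ᴴ * V₁ = 1) (V₂ : Matrix (β × Fin k) β ℂ) (X : Matrix α β ℂ) :
    (sandwich V₁ V₂ X)ᴴ * sandwich V₁ V₂ X ≤ sandwich V₂ V₂ (Xᴴ * X) := by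
  set P := V₁ * V₁ᴴ
  set W := (X ⊗ₖ (1 : Matrix (Fin k) (Fin k) ℂ)) * V₂
  have hP : IsStarProjection P := by
    refine isStarProjection_iff'.mpr ⟨?_, by simp [P, star_eq_conjTranspose]⟩
    simp only [P, Matrix.mul_assoc, ← Matrix.mul_assoc V₁ᴴ, hV₁, Matrix.one_mul]
  have hk := mul_kronecker_mul Xᴴ X (1 : Matrix (Fin k) (Fin k) ℂ) (1 : Matrix (Fin k) (Fin k) ℂ)
  rw [Matrix.one_mul] at hk
  have hdiff : sandwich V₂ V₂ (Xᴴ * X) - (sandwich V₁ V₂ X)ᴴ * sandwich V₁ V₂ X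
      = Wᴴ * (1 - P) * W := by
    simp only [sandwich_apply, W, P, hk, conjTranspose_mul, conjTranspose_kronecker,
      conjTranspose_one, conjTranspose_conjTranspose, Matrix.mul_sub, Matrix.sub_mul,
      Matrix.mul_one, Matrix.mul_assoc]
  rw [Matrix.le_iff, hdiff]
  exact (nonneg_iff_posSemidef.mp hP.one_sub_nonneg).conjTranspose_mul_mul_same W

theorem conjTranspose_mul_self_eq_smul_one_of_sandwich_eq_smul [DecidableEq α] [DecidableEq β]
    {V₁ : Matrix (α × Fin k) α ℂ} {V₂ : Matrix (β × Fin k) β ℂ} (hV₁ : V₁ᴴ * V₁ = 1)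
    (hV₂ : V₂ᴴ * V₂ = 1) (hP₂ : PrimitiveMap (sandwich V₂ V₂)) {c : ℂ} (hc : ‖c‖ = 1)
    {F : Matrix α β ℂ} (hF : F ≠ 0) (heig : sandwich V₁ V₂ F = c • F) :
    ∃ a : ℝ, 0 < a ∧ Fᴴ * F = (a : ℂ) • 1 := by
  have hcc : c * starRingEnd ℂ c = 1 := by
    rw [RCLike.mul_conj, hc]
    norm_num
  have hle : Fᴴ * F ≤ sandwich V₂ V₂ (Fᴴ * F) := by
    simpa [heig, smul_smul, hcc] using conjTranspose_sandwich_mul_self_le hV₁ V₂ F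
  obtain ⟨a, ha⟩ := hP₂.eq_smul_one_of_le_apply (fun _ ↦ posSemidef_sandwich V₂)
    (sandwich_one hV₂) (isHermitian_conjTranspose_mul_self F) hle
  have hpsd := posSemidef_conjTranspose_mul_self F
  have hne : Fᴴ * F ≠ 0 := fun h ↦ hF (conjTranspose_mul_self_eq_zero.mp h)
  rw [ha] at hpsd hne
  exact ⟨a, pos_of_posSemidef_smul_one hpsd hne, ha⟩

end Sandwich

section ScaledUnitary

variable {m n : Type*} [Fintype m] [Fintype n] [DecidableEq m] [DecidableEq n]
  {F : Matrix m n ℂ} {a b : ℝ}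

theorem eq_of_conjTranspose_mul_self_eq_smul_one (hF : F ≠ 0) (ha : Fᴴ * F = (a : ℂ) • 1)
    (hb : F * Fᴴ = (b : ℂ) • 1) : a = b := by
  have h : (a : ℂ) • F = (b : ℂ) • F := calc
    (a : ℂ) • F = F * (Fᴴ * F) := by rw [ha, Matrix.mul_smul, Matrix.mul_one]
    _ = F * Fᴴ * F := (Matrix.mul_assoc _ _ _).symm
    _ = (b : ℂ) • F := by rw [hb, Matrix.smul_mul, Matrix.one_mul]
  exact_mod_cast smul_left_injective ℂ hF h

theorem card_eq_of_conjTranspose_mul_self_eq_smul_one (ha₀ : a ≠ 0)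
    (h₁ : Fᴴ * F = (a : ℂ) • 1) (h₂ : F * Fᴴ = (a : ℂ) • 1) : Fintype.card m = Fintype.card n := by
  have h := trace_mul_comm F Fᴴ
  rw [h₁, h₂, trace_smul, trace_smul, trace_one, trace_one, smul_eq_mul, smul_eq_mul] at h
  exact_mod_cast mul_left_cancel₀ (Complex.ofReal_ne_zero.mpr ha₀) h

theorem exists_unitary_of_conjTranspose_mul_self_eq_smul_one (ha : 0 < a)
    (h₁ : Fᴴ * F = (a : ℂ) • 1) (h₂ : F * Fᴴ = (a : ℂ) • 1) :
    ∃ U : Matrix m n ℂ, Uᴴ * U = 1 ∧ U * Uᴴ = 1 ∧ F = ((√a : ℝ) : ℂ) • U := by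
  have hs : (√a)⁻¹ * (√a)⁻¹ * a = 1 := by
    rw [← mul_inv, Real.mul_self_sqrt ha.le, inv_mul_cancel₀ ha.ne']
  refine ⟨(((√a)⁻¹ : ℝ) : ℂ) • F, ?_, ?_, ?_⟩
  · rw [conjTranspose_smul, Complex.star_def, Complex.conj_ofReal, Matrix.smul_mul,
      Matrix.mul_smul, h₁, smul_smul, smul_smul, ← Complex.ofReal_mul, ← Complex.ofReal_mul, hs,
      Complex.ofReal_one, one_smul]
  · rw [conjTranspose_smul, Complex.star_def, Complex.conj_ofReal, Matrix.smul_mul,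
      Matrix.mul_smul, h₂, smul_smul, smul_smul, ← Complex.ofReal_mul, ← Complex.ofReal_mul, hs,
      Complex.ofReal_one, one_smul]
  · rw [smul_smul, ← Complex.ofReal_mul, mul_inv_cancel₀ (Real.sqrt_pos.mpr ha).ne',
      Complex.ofReal_one, one_smul]

end ScaledUnitary

/-- If the map `T₁₂(X) = V₁*(X ⊗ 1)V₂` between primitive isometries has an eigenvector `F`
with eigenvalue of modulus one, then `F*F` and `FF*` are positive multiples of the identity;
in particular the spaces have equal dimension and `F` is a scalar multiple of a unitary. -/
theorem modulus_one_eigenvector_is_multiple_of_unitary (D₁ D₂ k : ℕ)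
    (V₁ : Matrix (Fin D₁ × Fin k) (Fin D₁) ℂ) (hV₁ : V₁ᴴ * V₁ = 1) (hP₁ : PrimitiveIso V₁)
    (V₂ : Matrix (Fin D₂ × Fin k) (Fin D₂) ℂ) (hV₂ : V₂ᴴ * V₂ = 1) (hP₂ : PrimitiveIso V₂)
    (c : ℂ) (hc : ‖c‖ = 1)
    (F : Matrix (Fin D₁) (Fin D₂) ℂ) (hF : F ≠ 0)
    (heig : sandwich V₁ V₂ F = c • F) :
    ∃ α : ℝ, 0 < α ∧
      Fᴴ * F = (α : ℂ) • (1 : Matrix (Fin D₂) (Fin D₂) ℂ) ∧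
      F * Fᴴ = (α : ℂ) • (1 : Matrix (Fin D₁) (Fin D₁) ℂ) ∧
      D₁ = D₂ ∧
      ∃ U : Matrix (Fin D₁) (Fin D₂) ℂ, Uᴴ * U = 1 ∧ U * Uᴴ = 1 ∧
        F = ((Real.sqrt α : ℝ) : ℂ) • U := by
  obtain ⟨α, hα, h₁⟩ :=
    conjTranspose_mul_self_eq_smul_one_of_sandwich_eq_smul hV₁ hV₂ hP₂ hc hF heig
  have heig' : sandwich V₂ V₁ Fᴴ = starRingEnd ℂ c • Fᴴ := by
    rw [← conjTranspose_sandwich, heig, conjTranspose_smul, Complex.star_def]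
  obtain ⟨β, -, h₂⟩ := conjTranspose_mul_self_eq_smul_one_of_sandwich_eq_smul hV₂ hV₁ hP₁
    (by rwa [RCLike.norm_conj]) (conjTranspose_eq_zero.not.mpr hF) heig'
  rw [conjTranspose_conjTranspose] at h₂
  obtain rfl := eq_of_conjTranspose_mul_self_eq_smul_one hF h₁ h₂
  refine ⟨α, hα, h₁, h₂, ?_, exists_unitary_of_conjTranspose_mul_self_eq_smul_one hα h₁ h₂⟩
  simpa using card_eq_of_conjTranspose_mul_self_eq_smul_one hα.ne' h₁ h₂
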